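/- Let G be a group and x, y ∈ G. If y = x²·y·x² and y = x²·y⁻¹·x³, then x = y². -/
import Mathlib

theorem stmt_6 {G : Type*} [Group G] (x y : G)
    (h1 : y = x ^ 2 * y * x ^ 2) (h2 : y = x ^ 2 * y⁻¹ * x ^ 3) : x = y ^ 2 := by
  have h3 : y * x ^ 2 = x⁻¹ ^ 2 * y := by
    conv_rhs => rw [h1]
    group
  have h4 : y * x ^ 4 = x⁻¹ ^ 4 * y := by
    have : y * x ^ 4 = (y * x ^ 2) * x ^ 2 := by group
    rw [this, h3, mul_assoc, h3]
    group
  have h5 : y ^ 2 = (x ^ 2 * y * x ^ 2) * (x ^ 2 * y⁻¹ * x ^ 3) := by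
    nth_rewrite 1 [sq, h1]
    nth_rewrite 2 [h2]
    rfl
  have h6 : y ^ 2 = x ^ 2 * (y * x ^ 4) * y⁻¹ * x ^ 3 := by rw [h5]; group
  rw [h4] at h6
  rw [h6]; group
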